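/- arXiv:2311.01569 — 2 statements merged into one kernel-verified Lean document; each statement's English description precedes it below -/
import Mathlib

section
/- For every integer n ≥ 1, the number of linear chord diagrams on 2n vertices with no short chords is given by the inclusion-exclusion formula d_{n,0} = ∑_{j=0}^{n} (-1)^j · (2n-2j-1)!! · ρ_j, where ρ_j is the number of j-edge matchings of the path graph on 2n vertices and (2m-1)!! = (2m)!/(2^m·m!). -/
open Finset

/-- A linear chord diagram on `2*n` vertices: a fixed-point-free involution of `Fin (2*n)`.
Vertex `v ∈ {1,...,2n}` is represented by the index `v-1 : Fin (2*n)`. -/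
def IsLCD (n : ℕ) (f : Fin (2*n) → Fin (2*n)) : Prop :=
  ∀ i, f (f i) = i ∧ f i ≠ i

/-- The chord `{i, i+1}` (1-based vertices) is a short chord of `f`. -/
def IsShort (n : ℕ) (f : Fin (2*n) → Fin (2*n)) (i : ℕ) : Prop :=
  ∃ (_h1 : 1 ≤ i) (h2 : i < 2*n), f ⟨i-1, by omega⟩ = ⟨i, h2⟩

/-- The interval `[a,b] ⊆ {1,...,2n}` (1-based) is a bubble of the diagram `f`:
it contains no short chord, its left end is the start of the diagram or is preceded
by the short chord `{a-2,a-1}`, and its right end is the end of the diagram or is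
followed by the short chord `{b+1,b+2}`. -/
def IsBubble (n : ℕ) (f : Fin (2*n) → Fin (2*n)) (a b : ℕ) : Prop :=
  1 ≤ a ∧ a ≤ b ∧ b ≤ 2*n ∧
  (∀ i, a ≤ i → i + 1 ≤ b → ¬ IsShort n f i) ∧
  (a = 1 ∨ IsShort n f (a-2)) ∧
  (b = 2*n ∨ IsShort n f (b+1))

open scoped Classical in
/-- `B n p` : the number of pairs `(D, [a,b])` where `D` is a linear chord diagram on
`2n` vertices and `[a,b]` is a bubble of `D` of size `p = b - a + 1`. -/
noncomputable def B (n p : ℕ) : ℕ :=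
  ((univ ×ˢ (Finset.Icc 1 (2*n) ×ˢ Finset.Icc 1 (2*n))).filter
    (fun x : (Fin (2*n) → Fin (2*n)) × ℕ × ℕ =>
      IsLCD n x.1 ∧ IsBubble n x.1 x.2.1 x.2.2 ∧ x.2.2 - x.2.1 + 1 = p)).card

open scoped Classical in
/-- `d n s` : the number of linear chord diagrams on `2n` vertices having exactly `s`
short chords. -/
noncomputable def d (n s : ℕ) : ℕ :=
  (univ.filter (fun f : Fin (2*n) → Fin (2*n) =>
    IsLCD n f ∧ ((Finset.Icc 1 (2*n-1)).filter (fun i => IsShort n f i)).card = s)).card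

open scoped Classical in
/-- `pathMatch m j` : the number of `j`-edge matchings of the path graph on `m` vertices
`{1,...,m}` with edges `{i,i+1}`, `1 ≤ i ≤ m-1`.  An edge is encoded by its left
endpoint; a set of edges is a matching iff no two left endpoints are consecutive. -/
noncomputable def pathMatch (m j : ℕ) : ℕ :=
  (((Finset.Icc 1 (m-1)).powerset).filter
    (fun S => S.card = j ∧ ∀ i ∈ S, i + 1 ∉ S)).card

/-- The double factorial `(2m-1)!! = (2m)! / (2^m * m!)`, so `(-1)!! = 1`. -/
def doubleFact (m : ℕ) : ℕ := (2*m).factorial / (2^m * m.factorial)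

/-!
Inclusion–exclusion over the set `S` of short chords required to be present writes `d n 0` as
`∑_S (-1)^|S| N(S)`, where `N(S)` counts the diagrams containing the short chords `{i, i+1}`,
`i ∈ S`. The chords `{i, i+1}` and `{i+1, i+2}` share a vertex, so `N(S) = 0` unless `S` is a
matching of the path. If it is, let `p` be the involution exchanging the endpoints of these
chords: `f ↦ f ∘ p` identifies the diagrams containing them with the perfect matchings of the
other `2(n - |S|)` vertices, of which there are `(2(n - |S|) - 1)!!`. Grouping the matchings
`S` by size gives the formula.
-/

open Function
open scoped Nat

theorem Function.Involutive.apply_ne_self {α : Type*} {p : α → α} (hp : Involutive p) {x : α}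
    (hx : p x ≠ x) : p (p x) ≠ p x := by
  rwa [hp x, ne_comm]

theorem Function.Involutive.apply_eq_iff_forall_swap {α : Type*} [DecidableEq α] {f : α → α}
    (hf : Involutive f) {a b : α} (hab : a ≠ b) :
    f a = b ↔ ∀ x, Equiv.swap a b x ≠ x → f x = Equiv.swap a b x := by
  refine ⟨?_, fun h => by simpa using h a (by simpa using hab.symm)⟩
  rintro rfl x hx
  rcases (Equiv.swap_apply_ne_self_iff.mp hx).2 with rfl | rfl
  · simp
  · simp [hf a]

section Involutions

variable {α : Type*} [Fintype α] [DecidableEq α]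

def involutionsWithSupport (s : Finset α) : Finset (α → α) :=
  univ.filter fun f => (∀ x, f (f x) = x) ∧ ∀ x, f x ≠ x ↔ x ∈ s

theorem mem_involutionsWithSupport {s : Finset α} {f : α → α} :
    f ∈ involutionsWithSupport s ↔ Involutive f ∧ ∀ x, f x ≠ x ↔ x ∈ s := by
  simp [involutionsWithSupport, Involutive]

/-- The bijection is `f ↦ f ∘ p`, which is its own inverse. -/
theorem card_involutionsWithSupport_filter_extends {p : α → α} (hp : Involutive p)
    {s : Finset α} (hps : ∀ x, p x ≠ x → x ∈ s) :
    #((involutionsWithSupport s).filter fun f => ∀ x, p x ≠ x → f x = p x) =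
      #(involutionsWithSupport (s.filter fun x => p x = x)) := by
  refine card_nbij' (· ∘ p) (· ∘ p) ?_ ?_ (fun f _ => by ext; simp [hp _])
    (fun f _ => by ext; simp [hp _])
  · intro f hf
    simp only [coe_filter, mem_involutionsWithSupport, Set.mem_ofPred_eq, mem_coe] at hf ⊢
    obtain ⟨⟨hf, hfs⟩, hfp⟩ := hf
    have hsupp : ∀ x, p x ≠ x → f (p x) = x := fun x hx => by
      rw [hfp _ (hp.apply_ne_self hx), hp x]
    have hfix : ∀ x, p x = x → p (f x) = f x := fun x hx => by
      by_contra h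
      have hpfx : x = p (f x) := by rw [← hfp _ h, hf x]
      have hfx : f x = x := by simpa [hp _, hx, eq_comm] using congrArg p hpfx
      exact h (by rw [hfx, hx])
    refine ⟨fun x => ?_, fun x => ?_⟩
    · by_cases hx : p x = x
      · simp only [comp_apply, hx, hfix x hx, hf x]
      · simp only [comp_apply, hsupp x hx]
    · by_cases hx : p x = x
      · simp [hx, hfs]
      · simp [hx, hsupp x hx]
  · intro g hg
    simp only [coe_filter, mem_involutionsWithSupport, Set.mem_ofPred_eq, mem_coe,
      mem_filter] at hg ⊢
    obtain ⟨hg, hgs⟩ := hg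
    have hsupp : ∀ x, p x ≠ x → g x = x := fun x hx => by
      by_contra h
      exact hx ((hgs x).1 h).2
    have hfix : ∀ x, p x = x → p (g x) = g x := fun x hx => by
      by_cases h : g x = x
      · rw [h, hx]
      · exact ((hgs (g x)).1 (by rwa [hg x, ne_comm])).2
    refine ⟨⟨fun x => ?_, fun x => ?_⟩, fun x hx => hsupp _ (hp.apply_ne_self hx)⟩
    · by_cases hx : p x = x
      · simp only [comp_apply, hx, hfix x hx, hg x]
      · simp only [comp_apply, hsupp _ (hp.apply_ne_self hx), hp x, hsupp x hx]
    · by_cases hx : p x = x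
      · simp [hx, hgs]
      · simp [hsupp _ (hp.apply_ne_self hx), hx, hps x hx]

theorem involutionsWithSupport_empty : involutionsWithSupport (∅ : Finset α) = {id} := by
  ext f
  simp only [mem_involutionsWithSupport, notMem_empty, iff_false, not_not, mem_singleton]
  exact ⟨fun h => funext h.2, fun h => h ▸ ⟨fun _ => rfl, fun _ => rfl⟩⟩

theorem card_involutionsWithSupport {s : Finset α} {m : ℕ} (hs : #s = 2 * m) :
    #(involutionsWithSupport s) = (2 * m - 1)‼ := by
  induction m generalizing s with
  | zero => simp [card_eq_zero.mp hs, involutionsWithSupport_empty]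
  | succ m ih =>
    obtain ⟨a, ha⟩ : s.Nonempty := card_pos.mp (by omega)
    have hmaps : ∀ f ∈ involutionsWithSupport s, f a ∈ s.erase a := fun f hf => by
      obtain ⟨hf, hfs⟩ := mem_involutionsWithSupport.mp hf
      have hfa : f a ≠ a := (hfs a).2 ha
      exact mem_erase.mpr ⟨hfa, (hfs _).1 (by rwa [hf a, ne_comm])⟩
    have hfiber : ∀ b ∈ s.erase a,
        #((involutionsWithSupport s).filter fun f => f a = b) = (2 * m - 1)‼ := by
      intro b hb
      obtain ⟨hba, hbs⟩ := mem_erase.mp hb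
      have hswap : ∀ x, Equiv.swap a b x ≠ x → x ∈ s := fun x hx => by
        rcases (Equiv.swap_apply_ne_self_iff.mp hx).2 with rfl | rfl <;> assumption
      have hcard : #(s.filter fun x => Equiv.swap a b x = x) = 2 * m := by
        have : s.filter (fun x => Equiv.swap a b x = x) = (s.erase a).erase b := by
          ext x
          rw [mem_filter, ← not_ne_iff, Equiv.swap_apply_ne_self_iff]
          simp only [mem_erase, ne_eq, hba.symm, not_false_eq_true, true_and, not_or]
          tauto
        rw [this, card_erase_of_mem hb, card_erase_of_mem ha, hs]
        omega
      rw [← ih hcard,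
        ← card_involutionsWithSupport_filter_extends (Equiv.swap_apply_self a b) hswap]
      exact congrArg card (filter_congr fun f hf =>
        Involutive.apply_eq_iff_forall_swap (mem_involutionsWithSupport.mp hf).1 hba.symm)
    rw [card_eq_sum_card_fiberwise hmaps, sum_congr rfl hfiber, sum_const, card_erase_of_mem ha,
      hs, smul_eq_mul, show 2 * (m + 1) - 1 = 2 * m + 1 by omega, Nat.doubleFactorial_add_one]

end Involutions

theorem Finset.card_filter_forall_not_eq_sum_powerset {β ι : Type*} [Fintype β] (P : β → Prop)
    [DecidablePred P] (Q : ι → β → Prop) [∀ i, DecidablePred (Q i)] (s : Finset ι) :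
    (#{b | P b ∧ ∀ i ∈ s, ¬ Q i b} : ℤ) =
      ∑ t ∈ s.powerset, (-1 : ℤ) ^ #t * #{b | P b ∧ ∀ i ∈ t, Q i b} := by
  classical
  have hinf (t : Finset ι) (R : ι → β → Prop) [∀ i, DecidablePred (R i)] :
      (#{b | P b ∧ ∀ i ∈ t, R i b} : ℤ) =
        ∑ b ∈ t.inf (fun i => ({b | R i b} : Finset β)), if P b then 1 else 0 := by
    rw [sum_boole]
    congr 2
    ext b
    induction t using Finset.induction_on <;> simp_all [and_comm]
  simp_rw [hinf, ← compl_filter, inclusion_exclusion_sum_inf_compl, smul_eq_mul]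

theorem doubleFact_eq_doubleFactorial (m : ℕ) : doubleFact m = (2 * m - 1)‼ := by
  cases m with
  | zero => rfl
  | succ k =>
    rw [doubleFact, show 2 * (k + 1) = (2 * k + 1) + 1 by ring,
      Nat.factorial_eq_mul_doubleFactorial, show 2 * k + 1 + 1 = 2 * (k + 1) by ring,
      Nat.doubleFactorial_two_mul,
      Nat.mul_div_cancel_left _ (by positivity)]
    rfl

theorem isLCD_iff_mem_involutionsWithSupport {n : ℕ} {f : Fin (2 * n) → Fin (2 * n)} :
    IsLCD n f ↔ f ∈ involutionsWithSupport univ := by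
  simp [IsLCD, mem_involutionsWithSupport, Involutive, forall_and]

theorem isShort_iff {n : ℕ} {f : Fin (2 * n) → Fin (2 * n)} {i : ℕ} :
    IsShort n f i ↔ ∃ x : Fin (2 * n), x.val + 1 = i ∧ (f x).val = i := by
  constructor
  · rintro ⟨hi, hin, hf⟩
    exact ⟨_, Nat.sub_add_cancel hi, by rw [hf]⟩
  · rintro ⟨x, rfl, hx⟩
    refine ⟨by omega, hx ▸ (f x).isLt, ?_⟩
    ext
    simpa using hx

theorem not_isShort_and_isShort_succ {n : ℕ} {f : Fin (2 * n) → Fin (2 * n)} (hf : IsLCD n f)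
    (i : ℕ) : ¬ (IsShort n f i ∧ IsShort n f (i + 1)) := by
  rintro ⟨hi, hi'⟩
  obtain ⟨x, hx, hfx⟩ := isShort_iff.mp hi
  obtain ⟨y, hy, hfy⟩ := isShort_iff.mp hi'
  have hyx : f x = y := Fin.ext (by omega)
  have := congrArg Fin.val ((hf x).1)
  rw [hyx] at this
  omega

/-- In the 0-based vertices of `Fin (2 * n)`, exchanges `i - 1` and `i` for every `i ∈ S`, i.e.
the endpoints of the short chord `{i, i+1}` in the 1-based numbering of `IsShort`. -/
def shortChordSwap (n : ℕ) (S : Finset ℕ) (x : Fin (2 * n)) : Fin (2 * n) :=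
  if h : x.val + 1 ∈ S ∧ x.val + 1 < 2 * n then ⟨x.val + 1, h.2⟩
  else if x.val ∈ S then ⟨x.val - 1, by omega⟩ else x

section ShortChordSwap

variable {n : ℕ} {S : Finset ℕ}

theorem val_shortChordSwap (hS : S ⊆ Icc 1 (2 * n - 1)) (x : Fin (2 * n)) :
    (shortChordSwap n S x).val =
      if x.val + 1 ∈ S then x.val + 1 else if x.val ∈ S then x.val - 1 else x.val := by
  have hS' : ∀ i ∈ S, 1 ≤ i ∧ i < 2 * n := fun i hi => by have := mem_Icc.mp (hS hi); omega
  unfold shortChordSwap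
  split_ifs <;> simp_all

theorem shortChordSwap_ne_self_iff (hS : S ⊆ Icc 1 (2 * n - 1)) (x : Fin (2 * n)) :
    shortChordSwap n S x ≠ x ↔ x.val + 1 ∈ S ∨ x.val ∈ S := by
  have hS' : ∀ i ∈ S, 1 ≤ i := fun i hi => (mem_Icc.mp (hS hi)).1
  rw [Ne, Fin.ext_iff, val_shortChordSwap hS]
  split_ifs with h1 h2 <;> simp_all
  have := hS' _ h2
  omega

theorem involutive_shortChordSwap (hS : S ⊆ Icc 1 (2 * n - 1))
    (hmatch : ∀ i ∈ S, i + 1 ∉ S) :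
    Involutive (shortChordSwap n S) := by
  have hS' : ∀ i ∈ S, 1 ≤ i := fun i hi => (mem_Icc.mp (hS hi)).1
  intro x
  ext
  rw [val_shortChordSwap hS, val_shortChordSwap hS]
  split_ifs <;> simp_all

theorem forall_isShort_iff (hS : S ⊆ Icc 1 (2 * n - 1)) {f : Fin (2 * n) → Fin (2 * n)}
    (hf : IsLCD n f) :
    (∀ i ∈ S, IsShort n f i) ↔
      ∀ x, shortChordSwap n S x ≠ x → f x = shortChordSwap n S x := by
  constructor
  · intro hshort x hx
    ext
    rw [val_shortChordSwap hS]
    by_cases h : x.val + 1 ∈ S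
    · obtain ⟨y, hy, hfy⟩ := isShort_iff.mp (hshort _ h)
      rw [if_pos h, ← hfy, Fin.ext (by omega : y.val = x.val)]
    · have h' := ((shortChordSwap_ne_self_iff hS x).mp hx).resolve_left h
      obtain ⟨y, hy, hfy⟩ := isShort_iff.mp (hshort _ h')
      have hfx : f x = y := by rw [← (hf y).1, Fin.ext hfy]
      rw [if_neg h, if_pos h', hfx]
      omega
  · intro hswap i hi
    have hi1 := (mem_Icc.mp (hS hi)).1
    have hin := (mem_Icc.mp (hS hi)).2
    let x : Fin (2 * n) := ⟨i - 1, by omega⟩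
    have hx : x.val + 1 = i := Nat.sub_add_cancel hi1
    refine isShort_iff.mpr ⟨x, hx, ?_⟩
    rw [hswap x ((shortChordSwap_ne_self_iff hS x).mpr (.inl (hx ▸ hi))), val_shortChordSwap hS,
      if_pos (hx ▸ hi), hx]

theorem card_filter_shortChordSwap_ne_self (hS : S ⊆ Icc 1 (2 * n - 1))
    (hmatch : ∀ i ∈ S, i + 1 ∉ S) : #{x | shortChordSwap n S x ≠ x} = 2 * #S := by
  have hS' : ∀ i ∈ S, 1 ≤ i ∧ i < 2 * n := fun i hi => by have := mem_Icc.mp (hS hi); omega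
  have hmap : ({x | shortChordSwap n S x ≠ x} : Finset (Fin (2 * n))).map Fin.valEmbedding =
      S.image (· - 1) ∪ S := by
    ext k
    simp only [mem_map, mem_filter, mem_univ, true_and, shortChordSwap_ne_self_iff hS,
      Fin.valEmbedding_apply, mem_union, mem_image]
    constructor
    · rintro ⟨x, hx | hx, rfl⟩
      · exact .inl ⟨_, hx, rfl⟩
      · exact .inr hx
    · rintro (⟨i, hi, rfl⟩ | hk)
      · have := hS' i hi
        exact ⟨⟨i - 1, by omega⟩, .inl (by simpa [Nat.sub_add_cancel this.1]), rfl⟩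
      · exact ⟨⟨k, (hS' k hk).2⟩, .inr hk, rfl⟩
  have hdisj : Disjoint (S.image (· - 1)) S := by
    simp only [disjoint_left, mem_image]
    rintro _ ⟨i, hi, rfl⟩ h
    exact hmatch _ h (by rwa [Nat.sub_add_cancel (hS' i hi).1])
  have hinj : Set.InjOn (· - 1) (S : Set ℕ) := fun i hi j hj h => by
    have := (hS' i hi).1; have := (hS' j hj).1; simp only at h; omega
  rw [← card_map, hmap, card_union_of_disjoint hdisj, card_image_of_injOn hinj, two_mul]

theorem card_le_of_forall_succ_notMem (hS : S ⊆ Icc 1 (2 * n - 1))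
    (hmatch : ∀ i ∈ S, i + 1 ∉ S) : #S ≤ n := by
  have := card_le_univ ({x | shortChordSwap n S x ≠ x} : Finset (Fin (2 * n)))
  rw [card_filter_shortChordSwap_ne_self hS hmatch, Fintype.card_fin] at this
  omega

open scoped Classical in
theorem card_isLCD_forall_isShort_of_succ_mem {i : ℕ} (hi : i ∈ S) (hi' : i + 1 ∈ S) :
    #{f : Fin (2 * n) → Fin (2 * n) | IsLCD n f ∧ ∀ i ∈ S, IsShort n f i} = 0 :=
  card_eq_zero.mpr <| filter_eq_empty_iff.mpr fun _ _ hf =>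
    not_isShort_and_isShort_succ hf.1 i ⟨hf.2 i hi, hf.2 _ hi'⟩

open scoped Classical in
theorem card_isLCD_forall_isShort (hS : S ⊆ Icc 1 (2 * n - 1))
    (hmatch : ∀ i ∈ S, i + 1 ∉ S) :
    #{f : Fin (2 * n) → Fin (2 * n) | IsLCD n f ∧ ∀ i ∈ S, IsShort n f i} =
      doubleFact (n - #S) := by
  have hfix : #{x | shortChordSwap n S x = x} = 2 * (n - #S) := by
    have := card_filter_add_card_filter_not (s := univ) (fun x => shortChordSwap n S x = x)
    rw [card_filter_shortChordSwap_ne_self hS hmatch, card_univ, Fintype.card_fin] at this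
    omega
  calc #{f : Fin (2 * n) → Fin (2 * n) | IsLCD n f ∧ ∀ i ∈ S, IsShort n f i}
      = #((involutionsWithSupport univ).filter
          fun f => ∀ x, shortChordSwap n S x ≠ x → f x = shortChordSwap n S x) := by
        congr 1
        ext f
        rw [mem_filter, mem_filter, ← isLCD_iff_mem_involutionsWithSupport]
        simp only [mem_univ, true_and]
        exact and_congr_right (forall_isShort_iff hS)
    _ = #(involutionsWithSupport {x | shortChordSwap n S x = x}) := by
        convert card_involutionsWithSupport_filter_extends (involutive_shortChordSwap hS hmatch)
          fun x _ => mem_univ x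
    _ = doubleFact (n - #S) := by
        rw [card_involutionsWithSupport hfix, doubleFact_eq_doubleFactorial]

end ShortChordSwap

open scoped Classical in
theorem d_zero_eq_sum_powerset (n : ℕ) :
    (d n 0 : ℤ) = ∑ S ∈ (Icc 1 (2 * n - 1)).powerset, (-1 : ℤ) ^ #S *
      #{f : Fin (2 * n) → Fin (2 * n) | IsLCD n f ∧ ∀ i ∈ S, IsShort n f i} := by
  rw [← card_filter_forall_not_eq_sum_powerset, d]
  congr 2
  ext f
  simp [filter_eq_empty_iff]

theorem no_short_chord_inclusion_exclusion_general (n : ℕ) :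
    (d n 0 : ℤ) = ∑ j ∈ Finset.range (n+1),
      (-1)^j * (doubleFact (n-j) : ℤ) * (pathMatch (2*n) j : ℤ) := by
  classical
  set M := (Icc 1 (2 * n - 1)).powerset.filter fun S => ∀ i ∈ S, i + 1 ∉ S
  have hpathMatch : ∀ j, pathMatch (2 * n) j = #{S ∈ M | #S = j} := fun j => by
    simp only [pathMatch, M, filter_filter]
    congr 1
    exact filter_congr fun _ _ => and_comm
  calc (d n 0 : ℤ) = ∑ S ∈ M, (-1 : ℤ) ^ #S * (doubleFact (n - #S) : ℤ) := by
        rw [d_zero_eq_sum_powerset, sum_filter]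
        refine sum_congr rfl fun S hS => ?_
        split_ifs with hmatch
        · rw [card_isLCD_forall_isShort (mem_powerset.mp hS) hmatch]
        · obtain ⟨i, hi, hi'⟩ : ∃ i ∈ S, i + 1 ∈ S := by simpa using hmatch
          simp [card_isLCD_forall_isShort_of_succ_mem hi hi']
    _ = ∑ j ∈ range (n + 1), ∑ S ∈ M with #S = j,
          (-1 : ℤ) ^ #S * (doubleFact (n - #S) : ℤ) := by
        refine (sum_fiberwise_of_maps_to (fun S hS => ?_) _).symm
        rw [mem_filter, mem_powerset] at hS
        exact mem_range_succ_iff.mpr (card_le_of_forall_succ_notMem hS.1 hS.2)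
    _ = _ := by
        refine sum_congr rfl fun j _ => ?_
        rw [sum_congr rfl fun S hS => by rw [(mem_filter.mp hS).2], sum_const, hpathMatch,
          nsmul_eq_mul]
        ring

/-- Inclusion-exclusion: for every `n ≥ 1`, the number of linear chord diagrams on `2n`
vertices with no short chords is `∑_{j=0}^{n} (-1)^j (2n-2j-1)!! ρ_j`, where `ρ_j` is
the number of `j`-edge matchings of the path on `2n` vertices and
`(2(n-j)-1)!! = (2n-2j-1)!!` is the double factorial. -/
theorem no_short_chord_inclusion_exclusion (n : ℕ) (hn : 1 ≤ n) :
    (d n 0 : ℤ) = ∑ j ∈ Finset.range (n+1),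
      (-1)^j * (doubleFact (n-j) : ℤ) * (pathMatch (2*n) j : ℤ) :=
  no_short_chord_inclusion_exclusion_general n
end

section
/- For all integers n ≥ 1 and 0 ≤ j ≤ n, one has (2n-2j-1)!! · ρ_j = ∑_{s=j}^{n} C(s,j) · d_{n,s}, where ρ_j is the number of j-edge matchings of the path graph on 2n vertices; that is, placing short chords on a j-edge matching of the path and completing the remaining 2n-2j vertices arbitrarily counts each diagram with exactly s short chords C(s,j) times. -/
open Finset

lemma doubleFact_eq (m : ℕ) : doubleFact m = Nat.doubleFactorial (2*m-1) := by
  unfold doubleFact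
  cases m with
  | zero => simp [Nat.doubleFactorial]
  | succ k =>
    have h2 : 2*(k+1)-1 = 2*k+1 := by omega
    have h1 : 2*(k+1) = (2*k+1)+1 := by ring
    rw [h2, h1, Nat.factorial_eq_mul_doubleFactorial]
    have h3 : (2*k+1+1).doubleFactorial = 2^(k+1) * (k+1).factorial := by
      have := Nat.doubleFactorial_two_mul (k+1)
      rw [show 2*(k+1) = 2*k+1+1 by ring] at this
      exact this
    rw [h3, Nat.mul_div_cancel_left]
    positivity


def Aset (n : ℕ) (S : Finset ℕ) : Finset (Fin (2*n)) :=
  univ.filter (fun v => v.val ∉ S ∧ v.val + 1 ∉ S)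

lemma card_Aset (n : ℕ) (S : Finset ℕ) (hS : S ⊆ Finset.Icc 1 (2*n-1))
    (hnc : ∀ i ∈ S, i+1 ∉ S) (hn : 1 ≤ n) :
    S.card ≤ n ∧ (Aset n S).card = 2*(n - S.card) := by
  classical
  have hP : (univ.filter (fun v : Fin (2*n) => v.val ∈ S)).card = S.card := by
    apply card_bij (fun v _ => v.val)
    · intro v hv; exact (mem_filter.1 hv).2
    · intro v hv w hw h; exact Fin.ext h
    · intro i hi
      have := mem_Icc.1 (hS hi)
      exact ⟨⟨i, by omega⟩, mem_filter.2 ⟨mem_univ _, hi⟩, rfl⟩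
  have hQ : (univ.filter (fun v : Fin (2*n) => v.val + 1 ∈ S)).card = S.card := by
    apply card_bij (fun v _ => v.val + 1)
    · intro v hv; exact (mem_filter.1 hv).2
    · intro v hv w hw h; exact Fin.ext (by omega)
    · intro i hi
      have := mem_Icc.1 (hS hi)
      refine ⟨⟨i-1, by omega⟩, mem_filter.2 ⟨mem_univ _, ?_⟩, by simp; omega⟩
      simpa [Nat.sub_add_cancel this.1] using hi
  have hdisj : Disjoint (univ.filter (fun v : Fin (2*n) => v.val ∈ S))
      (univ.filter (fun v : Fin (2*n) => v.val + 1 ∈ S)) := by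
    rw [Finset.disjoint_filter]
    exact fun v _ h1 h2 => (hnc v.val h1) h2
  have hcov : (univ.filter (fun v : Fin (2*n) => v.val ∈ S ∨ v.val + 1 ∈ S)).card
      = 2 * S.card := by
    rw [filter_or, card_union_of_disjoint hdisj, hP, hQ]; ring
  have hsplit := card_filter_add_card_filter_not
    (s := (univ : Finset (Fin (2*n)))) (p := fun v => v.val ∈ S ∨ v.val + 1 ∈ S)
  rw [card_univ, Fintype.card_fin, hcov] at hsplit
  have hA : (Aset n S) = univ.filter (fun v : Fin (2*n) => ¬(v.val ∈ S ∨ v.val + 1 ∈ S)) := by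
    apply filter_congr; intro v _; simp [not_or]
  constructor
  · omega
  · rw [hA]; omega

open scoped Classical in
noncomputable def ExtSet (N : ℕ) (A : Finset (Fin N)) : Finset (Fin N → Fin N) :=
  univ.filter (fun f => (∀ i ∈ A, f i ∈ A ∧ f (f i) = i ∧ f i ≠ i) ∧ ∀ i ∉ A, f i = i)

lemma mem_ExtSet {N : ℕ} {A : Finset (Fin N)} {f : Fin N → Fin N} :
    f ∈ ExtSet N A ↔ (∀ i ∈ A, f i ∈ A ∧ f (f i) = i ∧ f i ≠ i) ∧ ∀ i ∉ A, f i = i := by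
  classical
  simp [ExtSet]

lemma mem_Aset {n : ℕ} {S : Finset ℕ} {v : Fin (2*n)} :
    v ∈ Aset n S ↔ v.val ∉ S ∧ v.val + 1 ∉ S := by simp [Aset]

open scoped Classical in
lemma count_ext (n : ℕ) (hn : 1 ≤ n) (S : Finset ℕ) (hS : S ⊆ Finset.Icc 1 (2*n-1))
    (hnc : ∀ i ∈ S, i+1 ∉ S) :
    (univ.filter (fun f : Fin (2*n) → Fin (2*n) => IsLCD n f ∧ ∀ i ∈ S, IsShort n f i)).card
      = (ExtSet (2*n) (Aset n S)).card := by
  classical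
  have hbd : ∀ i ∈ S, 1 ≤ i ∧ i < 2*n := by
    intro i hi; have := Finset.mem_Icc.1 (hS hi); omega
  -- key: short chords determine f on covered vertices
  have hpair : ∀ (f : Fin (2*n) → Fin (2*n)), IsLCD n f → (∀ i ∈ S, IsShort n f i) →
      ∀ i (hi : i ∈ S), f ⟨i-1, by have := hbd i hi; omega⟩ = ⟨i, (hbd i hi).2⟩ ∧
        f ⟨i, (hbd i hi).2⟩ = ⟨i-1, by have := hbd i hi; omega⟩ := by
    intro f hf hsh i hi
    obtain ⟨h1, h2, he⟩ := hsh i hi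
    refine ⟨he, ?_⟩
    have := (hf ⟨i-1, by omega⟩).1
    rw [he] at this
    exact this
  apply card_bij' (i := fun f _ => fun v => if v ∈ Aset n S then f v else v)
    (j := fun g _ => fun v =>
      if h : v.val + 1 ∈ S then ⟨v.val + 1, (hbd _ h).2⟩
      else if h2 : v.val ∈ S then ⟨v.val - 1, by omega⟩ else g v)
  case hi =>
    intro f hf
    rw [mem_filter] at hf
    obtain ⟨-, hlcd, hsh⟩ := hf
    have hmap : ∀ v ∈ Aset n S, f v ∈ Aset n S := by
      intro v hv
      rw [mem_Aset] at hv ⊢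
      obtain ⟨hv1, hv2⟩ := hv
      constructor
      · intro hc
        obtain ⟨e1, e2⟩ := hpair f hlcd hsh _ hc
        have hfv : (⟨(f v).val, (hbd _ hc).2⟩ : Fin (2*n)) = f v := Fin.ext rfl
        rw [hfv] at e2
        have : f (f v) = v := (hlcd v).1
        rw [e2] at this
        have hvval : (f v).val - 1 = v.val := congrArg Fin.val this
        have hb := hbd _ hc
        apply hv2
        have hv3 : v.val + 1 = (f v).val := by omega
        rw [hv3]; exact hc
      · intro hc
        obtain ⟨e1, e2⟩ := hpair f hlcd hsh _ hc
        have := hbd _ hc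
        have hfv : (⟨(f v).val + 1 - 1, by omega⟩ : Fin (2*n)) = f v := Fin.ext (by simp)
        rw [hfv] at e1
        have h2 : f (f v) = v := (hlcd v).1
        rw [e1] at h2
        apply hv1
        have hvval : (f v).val + 1 = v.val := congrArg Fin.val h2
        rw [← hvval]; exact hc
    rw [mem_ExtSet]
    constructor
    · intro v hv
      rw [if_pos hv]
      have hfv := hmap v hv
      rw [if_pos hfv]
      exact ⟨hfv, (hlcd v).1, (hlcd v).2⟩
    · intro v hv
      rw [if_neg hv]
  case hj =>
    intro g hg
    rw [mem_ExtSet] at hg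
    obtain ⟨hg1, hg2⟩ := hg
    rw [mem_filter]
    refine ⟨mem_univ _, ?_, ?_⟩
    · -- IsLCD
      intro v
      by_cases h : v.val + 1 ∈ S
      · have hnc2 : (v.val + 1) + 1 ∉ S := hnc _ h
        constructor
        · simp only [dif_pos h, dif_neg hnc2]
          exact Fin.ext (by simp)
        · simp only [dif_pos h]
          intro hc
          have := congrArg Fin.val hc
          simp at this
      · by_cases h2 : v.val ∈ S
        · have hb := hbd _ h2
          have hs : (v.val - 1) + 1 ∈ S := by
            rw [Nat.sub_add_cancel hb.1]; exact h2
          constructor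
          · simp only [dif_neg h, dif_pos h2, dif_pos hs]
            exact Fin.ext (by simp; omega)
          · simp only [dif_neg h, dif_pos h2]
            intro hc
            have := congrArg Fin.val hc
            simp at this; omega
        · have hvA : v ∈ Aset n S := mem_Aset.2 ⟨h2, h⟩
          obtain ⟨hm, he, hne⟩ := hg1 v hvA
          rw [mem_Aset] at hm
          constructor
          · simp only [dif_neg h, dif_neg h2, dif_neg hm.2, dif_neg hm.1]
            exact he
          · simp only [dif_neg h, dif_neg h2]
            exact hne
    · -- shorts
      intro i hi
      have hb := hbd _ hi
      refine ⟨hb.1, hb.2, ?_⟩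
      have hs : (i - 1) + 1 ∈ S := by rw [Nat.sub_add_cancel hb.1]; exact hi
      simp only [dif_pos hs]
      exact Fin.ext (by simp; omega)
  case left_inv =>
    intro f hf
    rw [mem_filter] at hf
    obtain ⟨-, hlcd, hsh⟩ := hf
    funext v
    by_cases h : v.val + 1 ∈ S
    · simp only [dif_pos h]
      obtain ⟨e1, e2⟩ := hpair f hlcd hsh _ h
      have hb := hbd _ h
      have : (⟨v.val + 1 - 1, by omega⟩ : Fin (2*n)) = v := Fin.ext (by simp)
      rw [this] at e1
      exact e1.symm
    · by_cases h2 : v.val ∈ S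
      · simp only [dif_neg h, dif_pos h2]
        obtain ⟨e1, e2⟩ := hpair f hlcd hsh _ h2
        have : (⟨v.val, v.isLt⟩ : Fin (2*n)) = v := Fin.ext rfl
        rw [this] at e2
        exact e2.symm
      · simp only [dif_neg h, dif_neg h2]
        rw [if_pos (mem_Aset.2 ⟨h2, h⟩)]
  case right_inv =>
    intro g hg
    rw [mem_ExtSet] at hg
    obtain ⟨hg1, hg2⟩ := hg
    funext v
    by_cases hv : v ∈ Aset n S
    · have hv' := mem_Aset.1 hv
      simp only [if_pos hv, dif_neg hv'.2, dif_neg hv'.1]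
    · simp only [if_neg hv]
      exact (hg2 v hv).symm

lemma extSet_card (N : ℕ) (m : ℕ) : ∀ (A : Finset (Fin N)), A.card = 2*m →
    (ExtSet N A).card = Nat.doubleFactorial (2*m-1) := by
  classical
  induction m with
  | zero =>
    intro A hA
    simp only [Nat.mul_zero, Finset.card_eq_zero] at hA
    subst hA
    rw [show (2*0-1 : ℕ) = 0 by omega]
    have : ExtSet N ∅ = {fun i => i} := by
      ext f
      rw [mem_ExtSet]
      simp only [mem_singleton, notMem_empty]
      constructor
      · rintro ⟨-, h2⟩; funext i; exact h2 i (by simp)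
      · rintro rfl; exact ⟨by simp, fun i _ => rfl⟩
    rw [this, card_singleton, Nat.doubleFactorial]
  | succ m ih =>
    intro A hA
    have hAne : A.Nonempty := by
      rw [← card_pos, hA]; omega
    set a := A.min' hAne with ha
    have haA : a ∈ A := A.min'_mem hAne
    have key : ∀ f ∈ ExtSet N A, f a ∈ A.erase a := by
      intro f hf
      rw [mem_ExtSet] at hf
      obtain ⟨hm, -, hne⟩ := hf.1 a haA
      exact mem_erase.2 ⟨hne, hm⟩
    rw [card_eq_sum_card_fiberwise key]
    have fib : ∀ b ∈ A.erase a,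
        ((ExtSet N A).filter (fun f => f a = b)).card = Nat.doubleFactorial (2*m-1) := by
      intro b hb
      obtain ⟨hba, hbA⟩ := mem_erase.1 hb
      have hsub : {a, b} ⊆ A := by
        intro x hx; simp only [mem_insert, mem_singleton] at hx
        rcases hx with rfl | rfl <;> assumption
      have hcard2 : ({a, b} : Finset (Fin N)).card = 2 := by
        rw [card_insert_of_notMem (by simpa using (Ne.symm hba)), card_singleton]
      have hcard : (A \ {a, b}).card = 2*m := by
        rw [card_sdiff_of_subset hsub, hA, hcard2]; omega
      rw [← ih (A \ {a,b}) hcard]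
      apply card_bij' (i := fun f _ => fun i => if i = a ∨ i = b then i else f i)
        (j := fun g _ => fun i => if i = a then b else if i = b then a else g i)
      · -- forward membership
        intro f hf
        simp only [mem_filter] at hf
        obtain ⟨hfE, hfa⟩ := hf
        rw [mem_ExtSet] at hfE ⊢
        obtain ⟨hA1, hA2⟩ := hfE
        have hfb : f b = a := by
          have := (hA1 a haA).2.1; rw [hfa] at this; exact this
        constructor
        · intro i hi
          rw [mem_sdiff, mem_insert, mem_singleton] at hi
          obtain ⟨hiA, hi2⟩ := hi
          push_neg at hi2
          obtain ⟨hia, hib⟩ := hi2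
          obtain ⟨hm1, hm2, hm3⟩ := hA1 i hiA
          have hfia : f i ≠ a := by
            intro h; apply hib; rw [← hm2, h, hfa]
          have hfib : f i ≠ b := by
            intro h; apply hia; rw [← hm2, h, hfb]
          rw [if_neg (by tauto), if_neg (by tauto)]
          exact ⟨by rw [mem_sdiff, mem_insert, mem_singleton]; tauto, hm2, hm3⟩
        · intro i hi
          rw [mem_sdiff, mem_insert, mem_singleton] at hi
          push_neg at hi
          by_cases hiab : i = a ∨ i = b
          · rw [if_pos hiab]
          · rw [if_neg hiab]
            push_neg at hiab
            exact hA2 i (fun h => (hi h).elim hiab.1 hiab.2 |>.elim)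
      · -- backward membership
        intro g hg
        rw [mem_ExtSet] at hg
        obtain ⟨hG1, hG2⟩ := hg
        rw [mem_filter, mem_ExtSet]
        refine ⟨⟨?_, ?_⟩, by simp⟩
        · intro i hiA
          by_cases hia : i = a
          · subst hia
            refine ⟨?_, ?_, ?_⟩ <;> simp [hba, hbA]
          · by_cases hib : i = b
            · subst hib
              refine ⟨?_, ?_, ?_⟩ <;> simp [hba, haA, Ne.symm hba]
            · rw [if_neg hia, if_neg hib]
              have hiAd : i ∈ A \ {a,b} := by
                rw [mem_sdiff, mem_insert, mem_singleton]; tauto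
              obtain ⟨hm1, hm2, hm3⟩ := hG1 i hiAd
              rw [mem_sdiff, mem_insert, mem_singleton] at hm1
              push_neg at hm1
              rw [if_neg hm1.2.1, if_neg hm1.2.2]
              exact ⟨hm1.1, hm2, hm3⟩
        · intro i hiA
          have hia : i ≠ a := fun h => hiA (h ▸ haA)
          have hib : i ≠ b := fun h => hiA (h ▸ hbA)
          rw [if_neg hia, if_neg hib]
          exact hG2 i (by rw [mem_sdiff]; tauto)
      · -- left inverse
        intro f hf
        simp only [mem_filter] at hf
        obtain ⟨hfE, hfa⟩ := hf
        rw [mem_ExtSet] at hfE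
        have hfb : f b = a := by
          have := (hfE.1 a haA).2.1; rw [hfa] at this; exact this
        funext i
        by_cases hia : i = a
        · subst hia; simp [hfa]
        · by_cases hib : i = b
          · subst hib; simp [hba, hfb]
          · simp [hia, hib]
      · -- right inverse
        intro g hg
        rw [mem_ExtSet] at hg
        funext i
        by_cases hia : i = a
        · subst hia
          have hga : g a = a := hg.2 a (by simp)
          simp [hga]
        · by_cases hib : i = b
          · subst hib
            have hgb : g i = i := hg.2 i (by simp)
            simp [hgb]
          · simp [hia, hib]
    rw [sum_congr rfl fib, sum_const, card_erase_of_mem haA, hA, smul_eq_mul]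
    have h1 : 2*(m+1) - 1 = (2*m-1) + 2 ∨ m = 0 := by omega
    rcases h1 with h1 | rfl
    · rw [h1, Nat.doubleFactorial_add_two]
    · simp [Nat.doubleFactorial]



lemma short_nonconsec {n : ℕ} {f : Fin (2*n) → Fin (2*n)} (hf : IsLCD n f) {i : ℕ}
    (h1 : IsShort n f i) (h2 : IsShort n f (i+1)) : False := by
  obtain ⟨hi1, hi2, e1⟩ := h1
  obtain ⟨hj1, hj2, e2⟩ := h2
  have e3 : f ⟨i, hi2⟩ = ⟨i-1, by omega⟩ := by
    have := (hf ⟨i-1, by omega⟩).1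
    rw [e1] at this
    exact this
  have e4 : (⟨i+1-1, by omega⟩ : Fin (2*n)) = ⟨i, hi2⟩ := Fin.ext (by simp)
  rw [e4] at e2
  rw [e2] at e3
  have := congrArg Fin.val e3
  simp at this
  omega

open scoped Classical in
lemma shortcount_le {n : ℕ} (hn : 1 ≤ n) {f : Fin (2*n) → Fin (2*n)} (hf : IsLCD n f) :
    ((Finset.Icc 1 (2*n-1)).filter (fun i => IsShort n f i)).card ≤ n := by
  classical
  set T := (Finset.Icc 1 (2*n-1)).filter (fun i => IsShort n f i) with hT
  have hTsub : T ⊆ Finset.Icc 1 (2*n-1) := filter_subset _ _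
  have hkey : ∀ i ∈ T, i + 1 ∉ T := by
    intro i hi hc
    exact short_nonconsec hf (mem_filter.1 hi).2 (mem_filter.1 hc).2
  have hbd : ∀ i ∈ T, 1 ≤ i ∧ i ≤ 2*n-1 := by
    intro i hi; exact Finset.mem_Icc.1 (hTsub hi)
  have himg : (T.image (fun i => i - 1)).card = T.card := by
    apply card_image_of_injOn
    intro x hx y hy h
    have h1 := hbd x hx; have h2 := hbd y hy
    simp only [] at h
    omega
  have hdisj : Disjoint T (T.image (fun i => i - 1)) := by
    rw [Finset.disjoint_left]
    intro x hx hc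
    obtain ⟨i, hiT, hieq⟩ := Finset.mem_image.1 hc
    have h1 := hbd x hx
    have h2 := hbd i hiT
    have : i = x + 1 := by omega
    exact hkey x hx (this ▸ hiT)
  have hsub2 : T ∪ T.image (fun i => i - 1) ⊆ Finset.Icc 0 (2*n-1) := by
    intro x hx
    rcases Finset.mem_union.1 hx with hx | hx
    · have := hbd x hx; exact Finset.mem_Icc.2 (by omega)
    · obtain ⟨i, hiT, hieq⟩ := Finset.mem_image.1 hx
      have := hbd i hiT
      exact Finset.mem_Icc.2 (by omega)
  have := Finset.card_le_card hsub2
  rw [card_union_of_disjoint hdisj, himg, Nat.card_Icc] at this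
  omega


open scoped Classical in
/-- For `n ≥ 1` and `j ≤ n`: `(2n-2j-1)!! · ρ_j = ∑_{s=j}^{n} C(s,j) · d_{n,s}`,
where `ρ_j` is the number of `j`-edge matchings of the path on `2n` vertices. -/
theorem short_chord_overcount (n j : ℕ) (hn : 1 ≤ n) (hj : j ≤ n) :
    doubleFact (n-j) * pathMatch (2*n) j =
      ∑ s ∈ Finset.Icc j n, s.choose j * d n s := by
  classical
  set P := ((univ : Finset (Fin (2*n) → Fin (2*n))) ×ˢ (Finset.Icc 1 (2*n-1)).powerset).filter
    (fun x : (Fin (2*n) → Fin (2*n)) × Finset ℕ =>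
      IsLCD n x.1 ∧ x.2.card = j ∧ ∀ i ∈ x.2, IsShort n x.1 i) with hPdef
  have hL : P.card = pathMatch (2*n) j * doubleFact (n-j) := by
    have hmaps : ∀ x ∈ P, x.2 ∈ ((Finset.Icc 1 (2*n-1)).powerset).filter
        (fun S => S.card = j ∧ ∀ i ∈ S, i + 1 ∉ S) := by
      intro x hx
      rw [hPdef, mem_filter, mem_product] at hx
      obtain ⟨⟨-, hpow⟩, hlcd, hcard, hsh⟩ := hx
      refine mem_filter.2 ⟨hpow, hcard, ?_⟩
      intro i hi hc
      exact short_nonconsec hlcd (hsh i hi) (hsh _ hc)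
    rw [card_eq_sum_card_fiberwise hmaps]
    have hfib : ∀ S ∈ ((Finset.Icc 1 (2*n-1)).powerset).filter
        (fun S => S.card = j ∧ ∀ i ∈ S, i + 1 ∉ S),
        (P.filter (fun x => x.2 = S)).card = doubleFact (n-j) := by
      intro S hS
      rw [mem_filter, mem_powerset] at hS
      obtain ⟨hpow, hcard, hnc⟩ := hS
      have step1 : (P.filter (fun x => x.2 = S)).card =
          (univ.filter (fun f : Fin (2*n) → Fin (2*n) =>
            IsLCD n f ∧ ∀ i ∈ S, IsShort n f i)).card := by
        apply card_bij' (i := fun x _ => x.1) (j := fun f _ => (f, S))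
        case hi =>
          intro x hx
          rw [mem_filter, hPdef, mem_filter] at hx
          obtain ⟨⟨-, hlcd, hc, hsh⟩, hx2⟩ := hx
          rw [mem_filter]
          exact ⟨mem_univ _, hlcd, by rw [← hx2]; exact hsh⟩
        case hj =>
          intro f hf
          rw [mem_filter] at hf
          obtain ⟨-, hlcd, hsh⟩ := hf
          rw [mem_filter, hPdef, mem_filter, mem_product]
          exact ⟨⟨⟨mem_univ _, mem_powerset.2 hpow⟩, hlcd, hcard, hsh⟩, rfl⟩
        case left_inv =>
          intro x hx
          rw [mem_filter] at hx
          rw [← hx.2]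
        case right_inv =>
          intro f hf
          rfl
      rw [step1, count_ext n hn S hpow hnc]
      obtain ⟨hjn, hAcard⟩ := card_Aset n S hpow hnc hn
      rw [hcard] at hAcard
      rw [extSet_card (2*n) (n-j) (Aset n S) hAcard, doubleFact_eq]
    rw [Finset.sum_congr rfl hfib, sum_const, smul_eq_mul]
    rfl
  have hR : P.card = ∑ s ∈ Finset.Icc j n, s.choose j * d n s := by
    have hmaps2 : ∀ x ∈ P, x.1 ∈ (univ : Finset (Fin (2*n) → Fin (2*n))).filter
        (fun f => IsLCD n f) := by
      intro x hx
      rw [hPdef, mem_filter] at hx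
      exact mem_filter.2 ⟨mem_univ _, hx.2.1⟩
    rw [card_eq_sum_card_fiberwise hmaps2]
    have hfib2 : ∀ f ∈ (univ : Finset (Fin (2*n) → Fin (2*n))).filter (fun f => IsLCD n f),
        (P.filter (fun x => x.1 = f)).card =
          (((Finset.Icc 1 (2*n-1)).filter (fun i => IsShort n f i)).card).choose j := by
      intro f hf
      rw [mem_filter] at hf
      rw [← Finset.card_powersetCard]
      apply card_bij' (i := fun x _ => x.2) (j := fun S _ => (f, S))
      case hi =>
        intro x hx
        rw [mem_filter, hPdef, mem_filter, mem_product] at hx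
        obtain ⟨⟨⟨-, hpow⟩, hlcd, hc, hsh⟩, hx1⟩ := hx
        rw [Finset.mem_powersetCard]
        refine ⟨?_, hc⟩
        intro i hi
        rw [mem_filter]
        exact ⟨mem_powerset.1 hpow hi, by rw [← hx1]; exact hsh i hi⟩
      case hj =>
        intro S hS
        rw [Finset.mem_powersetCard] at hS
        obtain ⟨hsub, hc⟩ := hS
        rw [mem_filter, hPdef, mem_filter, mem_product]
        refine ⟨⟨⟨mem_univ _, mem_powerset.2 ?_⟩, hf.2, hc, ?_⟩, rfl⟩
        · exact hsub.trans (filter_subset _ _)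
        · intro i hi
          exact (mem_filter.1 (hsub hi)).2
      case left_inv =>
        intro x hx
        rw [mem_filter] at hx
        rw [← hx.2]
      case right_inv =>
        intro S hS
        rfl
    rw [Finset.sum_congr rfl hfib2]
    have hmaps3 : ∀ f ∈ (univ : Finset (Fin (2*n) → Fin (2*n))).filter (fun f => IsLCD n f),
        ((Finset.Icc 1 (2*n-1)).filter (fun i => IsShort n f i)).card ∈ Finset.Icc 0 n := by
      intro f hf
      rw [mem_filter] at hf
      exact Finset.mem_Icc.2 ⟨Nat.zero_le _, shortcount_le hn hf.2⟩
    rw [← Finset.sum_fiberwise_of_maps_to hmaps3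
      (fun f => (((Finset.Icc 1 (2*n-1)).filter (fun i => IsShort n f i)).card).choose j)]
    have hinner : ∀ s ∈ Finset.Icc 0 n,
        (∑ f ∈ ((univ : Finset (Fin (2*n) → Fin (2*n))).filter (fun f => IsLCD n f)).filter
          (fun f => ((Finset.Icc 1 (2*n-1)).filter (fun i => IsShort n f i)).card = s),
          (((Finset.Icc 1 (2*n-1)).filter (fun i => IsShort n f i)).card).choose j)
        = s.choose j * d n s := by
      intro s _
      rw [Finset.sum_congr rfl (fun f hf => by
        rw [(mem_filter.1 hf).2]), sum_const, smul_eq_mul, Nat.mul_comm]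
      congr 1
      unfold d
      congr 1
      rw [Finset.filter_filter]
    rw [Finset.sum_congr rfl hinner]
    symm
    apply Finset.sum_subset
    · exact Finset.Icc_subset_Icc (Nat.zero_le _) le_rfl
    · intro s hs hns
      rw [Finset.mem_Icc] at hs hns
      have : s < j := by omega
      rw [Nat.choose_eq_zero_of_lt this, zero_mul]
  rw [Nat.mul_comm, ← hL]
  exact hR
end
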